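/- arXiv:1710.03852 — 3 statements merged into one kernel-verified Lean document; each statement's English description precedes it below -/
import Mathlib

section
/- Let V be a finite set with decidable equality, let F : V → ℝ satisfy F(i) ≥ 0 for all i ∈ V, and let α ≥ 0 be a real number. For a finite subset S ⊆ V with |S| = m, let a_1 ≥ a_2 ≥ ⋯ ≥ a_m be the multiset of values {F(i) : i ∈ S} listed in nonincreasing order, and define Φ(S) = Σ_{r=1}^{m} r^{−α} · a_r (so the value of rank r is discounted by the factor r^{−α}). Then Φ is nonnegative, monotone and submodular. -/
/-- The power-law aggregation (Eqn. 4 of the paper): list the values `F i` for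
`i ∈ S` in nonincreasing order `a_1 ≥ a_2 ≥ ⋯ ≥ a_m` and return
`∑_{r=1}^m r^{-α} · a_r` (the value of rank `r` is discounted by `r^{-α}`). -/
noncomputable def powerLawAgg {V : Type*} [DecidableEq V] (F : V → ℝ) (α : ℝ)
    (S : Finset V) : ℝ :=
  let l : List ℝ := ((S.val.map F).sort (· ≤ ·)).reverse
  ∑ r ∈ Finset.range l.length, ((r : ℝ) + 1) ^ (-α) * l.getD r 0

/-!
Write `Φ(S) = ∑ wᵣ aᵣ` with weights `w₀ ≥ w₁ ≥ ⋯ ≥ 0` and `a₀ ≥ a₁ ≥ ⋯ ≥ 0` the sorted values.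
Prepending a new maximum `y` to a sorted list cannot decrease the weighted sum: by Abel summation,
the loss `∑ (wᵣ - wᵣ₊₁) aᵣ` from moving every old entry one rank down is at most `w₀ a₀ ≤ w₀ y`.
Inserting a value anywhere prepends it to a tail, so `Φ` is monotone. For submodularity, insert
`y ≤ x` into a sorted list: the gain from `x` drops, when `y` is already present, by exactly the
gain from inserting `y` for the difference weights `wᵣ - wᵣ₊₁`, which are nonnegative because `w`
is antitone; so the monotonicity argument applies again.
-/

section WeightedSum

variable {R : Type*} [CommRing R]

def weightedSum : (ℕ → R) → List R → R
  | _, [] => 0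
  | w, a :: l => w 0 * a + weightedSum (fun n => w (n + 1)) l

@[simp]
lemma weightedSum_nil (w : ℕ → R) : weightedSum w [] = 0 := rfl

@[simp]
lemma weightedSum_cons (w : ℕ → R) (a : R) (l : List R) :
    weightedSum w (a :: l) = w 0 * a + weightedSum (fun n => w (n + 1)) l := rfl

lemma weightedSum_eq_sum (w : ℕ → R) (l : List R) :
    weightedSum w l = ∑ r ∈ Finset.range l.length, w r * l.getD r 0 := by
  induction l generalizing w with
  | nil => simp
  | cons a l ih => simp [Finset.sum_range_succ', ih, add_comm]

lemma weightedSum_sub (v u : ℕ → R) (l : List R) :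
    weightedSum (fun n => v n - u n) l = weightedSum v l - weightedSum u l := by
  induction l generalizing v u with
  | nil => simp
  | cons a l ih => simp only [weightedSum_cons, ih]; ring

variable [LinearOrder R] [IsStrictOrderedRing R] {w : ℕ → R} {l : List R} {x y : R}

lemma weightedSum_le_weightedSum_cons (hw : ∀ n, 0 ≤ w n) (hs : (y :: l).Pairwise (· ≥ ·))
    (hl : ∀ a ∈ y :: l, 0 ≤ a) : weightedSum w l ≤ weightedSum w (y :: l) := by
  induction l generalizing w y with
  | nil => simpa using mul_nonneg (hw 0) (hl y (by simp))
  | cons a l ih =>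
    have hay : a ≤ y := List.rel_of_pairwise_cons hs (by simp)
    have := ih (fun n => hw (n + 1)) hs.of_cons (fun b hb => hl b (by simp_all))
    simp only [weightedSum_cons] at this ⊢
    linarith [mul_le_mul_of_nonneg_left hay (hw 0)]

lemma weightedSum_le_weightedSum_orderedInsert (hw : ∀ n, 0 ≤ w n)
    (hs : l.Pairwise (· ≥ ·)) (hl : ∀ a ∈ l, 0 ≤ a) (hx : 0 ≤ x) :
    weightedSum w l ≤ weightedSum w (l.orderedInsert (· ≥ ·) x) := by
  induction l generalizing w with
  | nil => simpa using mul_nonneg (hw 0) hx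
  | cons a l ih =>
    rcases le_or_gt a x with hax | hxa
    · have hs' := hs.orderedInsert x
      rw [List.orderedInsert_cons_of_le (· ≥ ·) l hax] at hs' ⊢
      exact weightedSum_le_weightedSum_cons hw hs' (by simp_all)
    · rw [List.orderedInsert_of_not_le (· ≥ ·) l (not_le.2 hxa)]
      simpa using ih (fun n => hw (n + 1)) hs.of_cons (by simp_all)

lemma weightedSum_orderedInsert_orderedInsert_add_le (hw : Antitone w)
    (hs : l.Pairwise (· ≥ ·)) (hl : ∀ a ∈ l, 0 ≤ a) (hy : 0 ≤ y) (hyx : y ≤ x) :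
    weightedSum w ((l.orderedInsert (· ≥ ·) y).orderedInsert (· ≥ ·) x) + weightedSum w l ≤
      weightedSum w (l.orderedInsert (· ≥ ·) x) + weightedSum w (l.orderedInsert (· ≥ ·) y) := by
  induction l generalizing w with
  | nil =>
    simp only [List.orderedInsert_nil, List.orderedInsert_cons_of_le (· ≥ ·) [] hyx,
      weightedSum_cons, weightedSum_nil]
    linarith [mul_le_mul_of_nonneg_right (hw (Nat.zero_le 1)) hy]
  | cons a l ih =>
    have hΔ : ∀ n, 0 ≤ w n - w (n + 1) := fun n => sub_nonneg.2 (hw n.le_succ)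
    rcases le_or_gt a y with hay | hya
    · have hs' := hs.orderedInsert y
      rw [List.orderedInsert_cons_of_le (· ≥ ·) l hay] at hs' ⊢
      rw [List.orderedInsert_cons_of_le (· ≥ ·) _ hyx,
        List.orderedInsert_cons_of_le (· ≥ ·) l (hay.trans hyx)]
      have key := weightedSum_le_weightedSum_cons hΔ hs' (by simp_all)
      simp only [weightedSum_cons, weightedSum_sub] at key ⊢
      linarith
    rw [List.orderedInsert_of_not_le (· ≥ ·) l (not_le.2 hya)]
    rcases le_or_gt a x with hax | hxa
    · rw [List.orderedInsert_cons_of_le (· ≥ ·) _ hax, List.orderedInsert_cons_of_le (· ≥ ·) l hax]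
      have key := weightedSum_le_weightedSum_orderedInsert (fun n => hΔ (n + 1)) hs.of_cons
        (by simp_all) hy
      simp only [weightedSum_cons, weightedSum_sub] at key ⊢
      linarith
    · rw [List.orderedInsert_of_not_le (· ≥ ·) _ (not_le.2 hxa),
        List.orderedInsert_of_not_le (· ≥ ·) l (not_le.2 hxa)]
      have := ih (fun _ _ h => hw (Nat.succ_le_succ h)) hs.of_cons (by simp_all)
      simp only [weightedSum_cons]
      linarith

end WeightedSum

section SortedMultiset

variable {α : Type*}

@[elab_as_elim]
lemma Multiset.le_induction {P : Multiset α → Prop} {M N : Multiset α} (hMN : M ≤ N) (base : P M)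
    (step : ∀ x K, M ≤ K → x ::ₘ K ≤ N → P K → P (x ::ₘ K)) : P N := by
  obtain ⟨K, rfl⟩ := Multiset.le_iff_exists_add.1 hMN
  clear hMN
  induction K using Multiset.induction_on with
  | empty => simpa using base
  | cons x K ih =>
    rw [Multiset.add_cons] at step ⊢
    exact step x _ (Multiset.le_add_right _ _) le_rfl
      (ih fun y L hML hLN => step y L hML (hLN.trans (Multiset.le_cons_self _ _)))

variable [LinearOrder α]

lemma Multiset.sort_ge_cons (x : α) (M : Multiset α) :
    (x ::ₘ M).sort (· ≥ ·) = (M.sort (· ≥ ·)).orderedInsert (· ≥ ·) x := by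
  induction M using Quot.inductionOn
  simp [List.mergeSort_eq_insertionSort]

lemma Multiset.reverse_sort_le (M : Multiset α) :
    (M.sort (· ≤ ·)).reverse = M.sort (· ≥ ·) :=
  List.Perm.eq_of_pairwise' (r := (· ≥ ·)) (List.pairwise_reverse.2 (M.pairwise_sort _))
    (M.pairwise_sort _) (by rw [← Multiset.coe_eq_coe]; simp)

end SortedMultiset

section RankWeightedSum

variable {R : Type*} [CommRing R] [LinearOrder R] [IsStrictOrderedRing R]

def rankWeightedSum (w : ℕ → R) (M : Multiset R) : R := weightedSum w (M.sort (· ≥ ·))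

variable {w : ℕ → R} {M N : Multiset R} {x y : R}

lemma rankWeightedSum_le_cons (hw : ∀ n, 0 ≤ w n) (h : ∀ a ∈ x ::ₘ M, 0 ≤ a) :
    rankWeightedSum w M ≤ rankWeightedSum w (x ::ₘ M) := by
  rw [Multiset.forall_mem_cons] at h
  rw [rankWeightedSum, rankWeightedSum, Multiset.sort_ge_cons]
  exact weightedSum_le_weightedSum_orderedInsert hw (M.pairwise_sort _) (by simpa using h.2) h.1

lemma rankWeightedSum_cons_cons_add_le (hw : Antitone w) (h : ∀ a ∈ x ::ₘ y ::ₘ M, 0 ≤ a) :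
    rankWeightedSum w (x ::ₘ y ::ₘ M) + rankWeightedSum w M ≤
      rankWeightedSum w (x ::ₘ M) + rankWeightedSum w (y ::ₘ M) := by
  wlog hyx : y ≤ x generalizing x y
  · rw [Multiset.cons_swap, add_comm (rankWeightedSum w (x ::ₘ M))]
    exact this (by rwa [Multiset.cons_swap]) (le_of_not_ge hyx)
  simp only [Multiset.forall_mem_cons] at h
  simp only [rankWeightedSum, Multiset.sort_ge_cons]
  exact weightedSum_orderedInsert_orderedInsert_add_le hw (M.pairwise_sort _)
    (by simpa using h.2.2) h.2.1 hyx

lemma rankWeightedSum_le_of_le (hw : ∀ n, 0 ≤ w n) (hN : ∀ a ∈ N, 0 ≤ a) (hMN : M ≤ N) :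
    rankWeightedSum w M ≤ rankWeightedSum w N :=
  Multiset.le_induction hMN le_rfl fun _ _ _ hKN ih =>
    ih.trans (rankWeightedSum_le_cons hw fun a ha => hN a (Multiset.mem_of_le hKN ha))

lemma rankWeightedSum_cons_sub_le_of_le (hw : Antitone w) (hN : ∀ a ∈ N, 0 ≤ a) (hMN : M ≤ N)
    (hx : 0 ≤ x) :
    rankWeightedSum w (x ::ₘ N) - rankWeightedSum w N ≤
      rankWeightedSum w (x ::ₘ M) - rankWeightedSum w M :=
  Multiset.le_induction hMN le_rfl fun _ _ _ hKN ih => by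
    linarith [rankWeightedSum_cons_cons_add_le hw
      (Multiset.forall_mem_cons.2 ⟨hx, fun a ha => hN a (Multiset.mem_of_le hKN ha)⟩)]

end RankWeightedSum

lemma powerLawAgg_eq_rankWeightedSum {V : Type*} [DecidableEq V] (F : V → ℝ) (α : ℝ)
    (S : Finset V) :
    powerLawAgg F α S = rankWeightedSum (fun n : ℕ => ((n : ℝ) + 1) ^ (-α)) (S.val.map F) := by
  simp [powerLawAgg, rankWeightedSum, weightedSum_eq_sum, Multiset.reverse_sort_le]

lemma antitone_natCast_add_one_rpow_neg {α : ℝ} (hα : 0 ≤ α) :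
    Antitone fun n : ℕ => ((n : ℝ) + 1) ^ (-α) := fun _ _ hmn =>
  Real.rpow_le_rpow_of_nonpos (by positivity) (by gcongr) (neg_nonpos.2 hα)

theorem powerLawAgg_nonneg_monotone_submodular_general
    {V : Type*} [DecidableEq V] (F : V → ℝ) (hF : ∀ i, 0 ≤ F i)
    (α : ℝ) (hα : 0 ≤ α) :
    (∀ S : Finset V, 0 ≤ powerLawAgg F α S) ∧
    (∀ X Y : Finset V, X ⊆ Y → powerLawAgg F α X ≤ powerLawAgg F α Y) ∧
    (∀ (X Y : Finset V) (v : V), X ⊆ Y → v ∉ Y →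
      powerLawAgg F α (insert v Y) - powerLawAgg F α Y ≤
      powerLawAgg F α (insert v X) - powerLawAgg F α X) := by
  have hw : ∀ n : ℕ, 0 ≤ ((n : ℝ) + 1) ^ (-α) := fun n => Real.rpow_nonneg (by positivity) _
  have hF' (S : Finset V) : ∀ a ∈ S.val.map F, 0 ≤ a := by simpa using fun i _ => hF i
  have hmap {X Y : Finset V} (h : X ⊆ Y) : X.val.map F ≤ Y.val.map F :=
    Multiset.map_le_map (Finset.val_le_iff.2 h)
  simp only [powerLawAgg_eq_rankWeightedSum]
  refine ⟨fun S => ?_, fun X Y hXY => rankWeightedSum_le_of_le hw (hF' Y) (hmap hXY),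
    fun X Y v hXY hvY => ?_⟩
  · simpa [rankWeightedSum] using rankWeightedSum_le_of_le hw (hF' S) (Multiset.zero_le _)
  · rw [Finset.insert_val_of_notMem hvY, Finset.insert_val_of_notMem (fun h => hvY (hXY h)),
      Multiset.map_cons, Multiset.map_cons]
    exact rankWeightedSum_cons_sub_le_of_le (antitone_natCast_add_one_rpow_neg hα) (hF' Y)
      (hmap hXY) (hF v)

/-- Theorem 2 of the paper: for nonnegative ratings `F` and exponent `α ≥ 0`,
the power-law aggregation is nonnegative, monotone and submodular. -/
theorem powerLawAgg_nonneg_monotone_submodular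
    {V : Type*} [Fintype V] [DecidableEq V] (F : V → ℝ) (hF : ∀ i, 0 ≤ F i)
    (α : ℝ) (hα : 0 ≤ α) :
    (∀ S : Finset V, 0 ≤ powerLawAgg F α S) ∧
    (∀ X Y : Finset V, X ⊆ Y → powerLawAgg F α X ≤ powerLawAgg F α Y) ∧
    (∀ (X Y : Finset V) (v : V), X ⊆ Y → v ∉ Y →
      powerLawAgg F α (insert v Y) - powerLawAgg F α Y ≤
      powerLawAgg F α (insert v X) - powerLawAgg F α X) :=
  powerLawAgg_nonneg_monotone_submodular_general F hF α hα
end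

section
/- Let U be a finite set enumerated as i_1, …, i_m, let f : Finset U → ℝ be monotone and submodular with f(∅) = 0, let c : U → ℝ with c(i) > 0 for all i, and let B ≥ 0 be a budget with Σ_{j=1}^{m} c(i_j) > B. Set δ_j = f({i_j}) and assume the enumeration is sorted by decreasing ratio, i.e. δ_1/c(i_1) ≥ δ_2/c(i_2) ≥ ⋯ ≥ δ_m/c(i_m). Let l be the index such that C := Σ_{j=1}^{l−1} c(i_j) ≤ B and Σ_{j=1}^{l} c(i_j) > B, and set λ = (B − C)/c(i_l). Then for every S ⊆ U with Σ_{i∈S} c(i) ≤ B, one has f(S) ≤ Σ_{j=1}^{l−1} δ_j + λ·δ_l. -/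
/-!
Submodularity with `f ∅ = 0` makes `f` subadditive, so `f S ≤ ∑_{i ∈ S} δ_i` and the problem is
relaxed to a linear knapsack. With `ρ = δ_l / c_l`, sortedness gives `δ_i - ρ c_i ≥ 0`
for `i < l` and `≤ 0` for `i ≥ l`, so `∑_{i ∈ S} (δ_i - ρ c_i) ≤ ∑_{i < l} (δ_i - ρ c_i)`;
adding `ρ ∑_{i ∈ S} c_i ≤ ρ B` yields the fractional-knapsack value.
-/

open Finset

theorem sum_singleton_ge_of_submodular {α : Type*} [DecidableEq α] (f : Finset α → ℝ)
    (hempty : f ∅ = 0)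
    (hsub : ∀ (X Y : Finset α) (v : α), X ⊆ Y → v ∉ Y →
      f (insert v Y) - f Y ≤ f (insert v X) - f X)
    (T : Finset α) : f T ≤ ∑ i ∈ T, f {i} := by
  induction T using Finset.induction_on with
  | empty => simp [hempty]
  | @insert v T hv ih =>
    have hmarginal := hsub ∅ T v (empty_subset T) hv
    rw [insert_empty, hempty, sub_zero] at hmarginal
    rw [sum_insert hv]
    linarith

section FractionalKnapsack

variable {ι : Type*} [LinearOrder ι] [LocallyFiniteOrderBot ι]

theorem sum_sub_mul_le_sum_Iio (w c : ι → ℝ) (ρ : ℝ) (l : ι)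
    (hlo : ∀ i < l, ρ * c i ≤ w i) (hhi : ∀ i, l ≤ i → w i ≤ ρ * c i) (S : Finset ι) :
    ∑ i ∈ S, (w i - ρ * c i) ≤ ∑ i ∈ Iio l, (w i - ρ * c i) := by
  rw [← sum_filter_add_sum_filter_not S (· < l)]
  have hbelow : ∑ i ∈ S.filter (· < l), (w i - ρ * c i) ≤ ∑ i ∈ Iio l, (w i - ρ * c i) :=
    sum_le_sum_of_subset_of_nonneg (fun i hi => mem_Iio.2 (mem_filter.1 hi).2)
      fun i hi _ => sub_nonneg.2 (hlo i (mem_Iio.1 hi))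
  have habove : ∑ i ∈ S.filter (¬ · < l), (w i - ρ * c i) ≤ 0 :=
    sum_nonpos fun i hi => sub_nonpos.2 (hhi i (not_lt.1 (mem_filter.1 hi).2))
  linarith

theorem sum_le_fractional_knapsack (w c : ι → ℝ) (hc : ∀ i, 0 < c i)
    (hratio : Antitone fun i => w i / c i) (l : ι) (hwl : 0 ≤ w l)
    (B : ℝ) (S : Finset ι) (hS : ∑ i ∈ S, c i ≤ B) :
    ∑ i ∈ S, w i ≤ ∑ i ∈ Iio l, w i + (B - ∑ i ∈ Iio l, c i) / c l * w l := by
  set ρ := w l / c l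
  have hlo : ∀ i < l, ρ * c i ≤ w i := fun i hi => (le_div_iff₀ (hc i)).1 (hratio hi.le)
  have hhi : ∀ i, l ≤ i → w i ≤ ρ * c i := fun i hi =>
    (div_le_iff₀ (hc i)).1 (hratio hi)
  have hlagrange := sum_sub_mul_le_sum_Iio w c ρ l hlo hhi S
  have hbudget : ρ * ∑ i ∈ S, c i ≤ ρ * B := mul_le_mul_of_nonneg_left hS (div_nonneg hwl (hc l).le)
  have hfraction : (B - ∑ i ∈ Iio l, c i) / c l * w l = ρ * (B - ∑ i ∈ Iio l, c i) := by ring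
  rw [sum_sub_distrib, sum_sub_distrib, ← mul_sum, ← mul_sum] at hlagrange
  rw [hfraction]
  linarith

end FractionalKnapsack

/-- The ground set `U = {i_1, …, i_m}` is `Fin m` in its sorted enumeration, and `δ_j = f {j}`. -/
theorem online_upper_bound_general
    (m : ℕ) (f : Finset (Fin m) → ℝ)
    (hempty : f ∅ = 0)
    (hmono : ∀ X Y : Finset (Fin m), X ⊆ Y → f X ≤ f Y)
    (hsub : ∀ (X Y : Finset (Fin m)) (v : Fin m), X ⊆ Y → v ∉ Y →
      f (insert v Y) - f Y ≤ f (insert v X) - f X)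
    (c : Fin m → ℝ) (hc : ∀ j, 0 < c j)
    (B : ℝ)
    (hsorted : ∀ j k : Fin m, j ≤ k → f {k} / c k ≤ f {j} / c j)
    (l : Fin m)
    (S : Finset (Fin m)) (hS : ∑ i ∈ S, c i ≤ B) :
    f S ≤ (∑ j ∈ Finset.Iio l, f {j}) +
      (B - ∑ j ∈ Finset.Iio l, c j) / c l * f {l} := by
  have hδl : 0 ≤ f {l} := hempty ▸ hmono ∅ {l} (empty_subset _)
  calc f S ≤ ∑ i ∈ S, f {i} := sum_singleton_ge_of_submodular f hempty hsub S
    _ ≤ _ := sum_le_fractional_knapsack (fun i => f {i}) c hc hsorted l hδl B S hS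

/-- Theorem 4 of the paper: the online fractional-knapsack upper bound
`UP = ∑_{j<l} δ_j + λ·δ_l` dominates the optimum of budget-constrained
submodular maximization.  The ground set `U = {i_1, …, i_m}` is modeled as
`Fin m`, `δ j = f {j}`, and items are sorted by decreasing ratio `δ_j / c_j`. -/
theorem online_upper_bound
    (m : ℕ) (f : Finset (Fin m) → ℝ)
    (hempty : f ∅ = 0)
    (hmono : ∀ X Y : Finset (Fin m), X ⊆ Y → f X ≤ f Y)
    (hsub : ∀ (X Y : Finset (Fin m)) (v : Fin m), X ⊆ Y → v ∉ Y →
      f (insert v Y) - f Y ≤ f (insert v X) - f X)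
    (c : Fin m → ℝ) (hc : ∀ j, 0 < c j)
    (B : ℝ) (hB : 0 ≤ B) (htotal : B < ∑ j, c j)
    (hsorted : ∀ j k : Fin m, j ≤ k → f {k} / c k ≤ f {j} / c j)
    (l : Fin m)
    (hC : ∑ j ∈ Finset.Iio l, c j ≤ B)
    (hCl : B < ∑ j ∈ Finset.Iic l, c j)
    (S : Finset (Fin m)) (hS : ∑ i ∈ S, c i ≤ B) :
    f S ≤ (∑ j ∈ Finset.Iio l, f {j}) +
      (B - ∑ j ∈ Finset.Iio l, c j) / c l * f {l} :=
  online_upper_bound_general m f hempty hmono hsub c hc B hsorted l S hS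
end

section
/- Let v_0, v_1, …, v_m (m ≥ 1) be the vertices, in order, of a path in a directed graph with nonnegative edge costs t, so that each (v_k, v_{k+1}) is an edge of the graph. For a vertex v, let minOut(v) denote the minimum cost over out-edges of v and minIn(v) the minimum cost over in-edges of v (these minima exist since v_0, …, v_{m−1} each have an out-edge on the path and v_1, …, v_m each have an in-edge on the path). Then minOut(v_0)/2 + Σ_{k=1}^{m−1} (minIn(v_k)/2 + minOut(v_k)/2) + minIn(v_m)/2 ≤ Σ_{k=0}^{m−1} t(v_k, v_{k+1}). -/
open Finset

theorem Finset.sum_range_add_shift_eq {M : Type*} [AddCommMonoid M] (f g : ℕ → M) {m : ℕ}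
    (hm : 1 ≤ m) :
    ∑ k ∈ range m, (f k + g (k + 1)) = f 0 + ∑ k ∈ Ico 1 m, (g k + f k) + g m := by
  have hf : ∑ k ∈ range m, f k = f 0 + ∑ k ∈ Ico 1 m, f k := sum_range_eq_add_Ico f hm
  have hg : ∑ k ∈ range m, g (k + 1) = ∑ k ∈ Ico 1 m, g k + g m := by
    rw [← sum_Ico_succ_top hm, sum_Ico_eq_sum_range, Nat.add_sub_cancel]
    simp only [add_comm 1]
  rw [sum_add_distrib, hf, hg, sum_add_distrib]
  abel

theorem half_min_edge_lower_bound_general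
    {V : Type*} (E : V → V → Prop) (t : V → V → ℝ)
    (m : ℕ) (hm : 1 ≤ m) (v : ℕ → V)
    (hpath : ∀ k, k < m → E (v k) (v (k + 1)))
    (minOut minIn : V → ℝ)
    (hOutLB : ∀ a b, E a b → minOut a ≤ t a b)
    (hInLB : ∀ a b, E a b → minIn b ≤ t a b) :
    minOut (v 0) / 2 +
      (∑ k ∈ Finset.Ico 1 m, (minIn (v k) / 2 + minOut (v k) / 2)) +
      minIn (v m) / 2 ≤ ∑ k ∈ Finset.range m, t (v k) (v (k + 1)) := by
  rw [← sum_range_add_shift_eq (fun k => minOut (v k) / 2) (fun k => minIn (v k) / 2) hm]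
  refine sum_le_sum fun k hk => ?_
  have hedge := hpath k (mem_range.mp hk)
  linarith [hOutLB _ _ hedge, hInLB _ _ hedge]

/-- The per-POI cost underestimation behind Pruning-2 of the paper: for any
path `v_0, …, v_m` (`m ≥ 1`) in a directed graph with nonnegative edge costs,
charging half of the minimum out-edge cost of the start, half of the minimum
in-edge cost of the end, and half of the minimum in- and out-edge costs of each
internal vertex never exceeds the true traveling cost of the path. -/
theorem half_min_edge_lower_bound
    {V : Type*} (E : V → V → Prop) (t : V → V → ℝ)
    (ht : ∀ a b, 0 ≤ t a b)
    (m : ℕ) (hm : 1 ≤ m) (v : ℕ → V)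
    (hpath : ∀ k, k < m → E (v k) (v (k + 1)))
    (minOut minIn : V → ℝ)
    (hOutLB : ∀ a b, E a b → minOut a ≤ t a b)
    (hOutMem : ∀ a, (∃ b, E a b) → ∃ b, E a b ∧ minOut a = t a b)
    (hInLB : ∀ a b, E a b → minIn b ≤ t a b)
    (hInMem : ∀ b, (∃ a, E a b) → ∃ a, E a b ∧ minIn b = t a b) :
    minOut (v 0) / 2 +
      (∑ k ∈ Finset.Ico 1 m, (minIn (v k) / 2 + minOut (v k) / 2)) +
      minIn (v m) / 2 ≤ ∑ k ∈ Finset.range m, t (v k) (v (k + 1)) :=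
  half_min_edge_lower_bound_general E t m hm v hpath minOut minIn hOutLB hInLB
end
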